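/- arXiv:1306.5603 — 3 statements merged into one kernel-verified Lean document; each statement's English description precedes it below -/
import Mathlib

section
/- Suppose that the measure-preserving system (T_{θ₀}, μ_{θ₀}) on (X, 𝒳) is ergodic (condition (S1)). Then the observation process (Y_k)_{k≥0} is stationary and ergodic under the measure P^Y_{θ₀}, i.e., the left-shift map on Y^ℕ preserves P^Y_{θ₀} and is ergodic with respect to it. -/
open MeasureTheory Filter Topology

noncomputable section

/-- `log⁺ t = max (log t) 0`. -/
def plog (t : ℝ) : ℝ := max (Real.log t) 0

/-- A parametrized family of dynamical systems observed with noise: dynamics `T θ`,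
invariant initial measures `μ θ`, a reference measure `ν` on the observation space,
observation densities `g θ x ·` with respect to `ν`, and the joint law `P θ` on
`X × Y^ℕ` of the initial state together with the observation sequence. -/
structure DynModel (Θ : Type*) (X : Type*) (Y : Type*)
    [MeasurableSpace X] [MeasurableSpace Y] where
  T : Θ → X → X
  μ : Θ → MeasureTheory.Measure X
  ν : MeasureTheory.Measure Y
  g : Θ → X → Y → ℝ
  P : Θ → MeasureTheory.Measure (X × (ℕ → Y))

namespace DynModel

/-- The cylinder subset of `Y^ℕ` determined by a set `B` of strings of length `n+1`. -/
def cyl {Y : Type*} (n : ℕ) (B : Set (Fin (n + 1) → Y)) : Set (ℕ → Y) :=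
  {y : ℕ → Y | (fun i : Fin (n + 1) => y i.val) ∈ B}

variable {Θ X Y : Type*} [MeasurableSpace X] [MeasurableSpace Y]

/-- The conditional likelihood `p_θ(y₀ⁿ ∣ x) = ∏_{j=0}^n g_θ(y_j ∣ T_θ^j x)`. -/
def pcond (M : DynModel Θ X Y) (θ : Θ) (n : ℕ) (y : ℕ → Y) (x : X) : ℝ :=
  ∏ j ∈ Finset.range (n + 1), M.g θ ((M.T θ)^[j] x) (y j)

/-- The marginal likelihood `p_θ(y₀ⁿ) = ∫ p_θ(y₀ⁿ ∣ x) dμ_θ(x)`. -/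
def p (M : DynModel Θ X Y) (θ : Θ) (n : ℕ) (y : ℕ → Y) : ℝ :=
  ∫ x, M.pcond θ n y x ∂(M.μ θ)

/-- `γ_θ(y) = sup_{x ∈ X} g_θ(y ∣ x)`. -/
def γ (M : DynModel Θ X Y) (θ : Θ) (y : Y) : ℝ := ⨆ x : X, M.g θ x y

/-- The marginal law `P^Y_θ` of the observation process on `Y^ℕ`. -/
def PY (M : DynModel Θ X Y) (θ : Θ) : Measure (ℕ → Y) := (M.P θ).map Prod.snd

/-- The equivalence class `[θ₀] = {θ : P^Y_θ = P^Y_{θ₀}}`. -/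
def cls (M : DynModel Θ X Y) (θ₀ : Θ) : Set Θ := {θ | M.PY θ = M.PY θ₀}

/-- Structural assumptions: each `T θ` is measurable and preserves the probability
measure `μ θ`; the `g θ x` are probability densities w.r.t. `ν`; and `P θ` is the
probability measure on `X × Y^ℕ` determined by
`P_θ(A × B) = ∫_A ∫_B p_θ(y₀ⁿ ∣ x) dνⁿ(y₀ⁿ) dμ_θ(x)` on cylinder sets. -/
def IsModel (M : DynModel Θ X Y) : Prop :=
  (∀ θ, Measurable (M.T θ)) ∧
  (∀ θ, IsProbabilityMeasure (M.μ θ)) ∧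
  (∀ θ, MeasurePreserving (M.T θ) (M.μ θ) (M.μ θ)) ∧
  SigmaFinite M.ν ∧
  (∀ θ, Measurable (Function.uncurry (M.g θ))) ∧
  (∀ θ x y, 0 ≤ M.g θ x y) ∧
  (∀ θ x, ∫ y, M.g θ x y ∂M.ν = 1) ∧
  (∀ θ, IsProbabilityMeasure (M.P θ)) ∧
  (∀ (θ : Θ) (n : ℕ) (A : Set X) (B : Set (Fin (n + 1) → Y)),
    MeasurableSet A → MeasurableSet B →
    M.P θ (A ×ˢ cyl n B) =
      ∫⁻ x in A, ∫⁻ w in B,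
          ∏ j : Fin (n + 1), ENNReal.ofReal (M.g θ ((M.T θ)^[j.val] x) (w j))
        ∂(Measure.pi fun _ : Fin (n + 1) => M.ν) ∂(M.μ θ))

/-- (S1) Ergodicity of the true system. -/
def S1 (M : DynModel Θ X Y) (θ₀ : Θ) : Prop := Ergodic (M.T θ₀) (M.μ θ₀)

/-- (S2) Logarithmic integrability at `θ₀`. -/
def S2 (M : DynModel Θ X Y) (θ₀ : Θ) : Prop :=
  Integrable (fun ω : X × (ℕ → Y) => plog (M.γ θ₀ (ω.2 0))) (M.P θ₀) ∧
  Integrable (fun ω : X × (ℕ → Y) =>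
    Real.log (∫ x, M.g θ₀ x (ω.2 0) ∂(M.μ θ₀))) (M.P θ₀)

section Topo

variable [MetricSpace Θ]

/-- (S3) Logarithmic integrability away from `θ₀`. -/
def S3 (M : DynModel Θ X Y) (θ₀ : Θ) : Prop :=
  ∀ θ' ∉ M.cls θ₀, ∃ U ∈ 𝓝 θ',
    Integrable (fun ω : X × (ℕ → Y) =>
      sSup ((fun θ => plog (M.γ θ (ω.2 0))) '' U)) (M.P θ₀)

/-- (S4) Upper semi-continuity of the likelihood away from `θ₀`. -/
def S4 (M : DynModel Θ X Y) (θ₀ : Θ) : Prop :=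
  ∀ θ' ∉ M.cls θ₀, ∀ n : ℕ,
    ∀ᵐ ω ∂(M.P θ₀), UpperSemicontinuousAt (fun θ => M.p θ n ω.2) θ'

variable [MeasurableSpace Θ]

/-- (S5) Mixing condition, with the gap `ℓ` and the functions `C_m` made explicit.
Each `C m θ` is a measurable nonnegative function of the string `y₀^m` (i.e. it
depends only on the first `m+1` coordinates). -/
def S5With (M : DynModel Θ X Y) (θ₀ : Θ) (ℓ : ℕ) (C : ℕ → Θ → (ℕ → Y) → ℝ) : Prop :=
  (∀ m, Measurable fun q : Θ × (ℕ → Y) => C m q.1 q.2) ∧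
  (∀ m θ w, 0 ≤ C m θ w) ∧
  (∀ (m : ℕ) (θ : Θ) (w w' : ℕ → Y), (∀ i ≤ m, w i = w' i) → C m θ w = C m θ w') ∧
  (∀ (θ : Θ) (m t : ℕ), 1 ≤ t → ∀ w : ℕ → ℕ → Y,
    ∫ x, ∏ j ∈ Finset.range (t + 1),
        M.pcond θ m (w j) ((M.T θ)^[j * (m + ℓ)] x) ∂(M.μ θ) ≤
      (∏ j ∈ Finset.range (t + 1), C m θ (w j)) *
        ∏ j ∈ Finset.range (t + 1), M.p θ m (w j)) ∧
  (∀ θ' ∉ M.cls θ₀, ∃ U ∈ 𝓝 θ', ∃ B : ℝ, ∀ m : ℕ,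
    ∫ ω, sSup ((fun θ => Real.log (C m θ ω.2)) '' U) ∂(M.P θ₀) ≤ B)

/-- (S5) Mixing condition. -/
def S5 (M : DynModel Θ X Y) (θ₀ : Θ) : Prop := ∃ ℓ C, M.S5With θ₀ ℓ C

end Topo

/-- (S6) Exponential identifiability. -/
def S6 (M : DynModel Θ X Y) (θ₀ : Θ) : Prop :=
  ∀ θ ∉ M.cls θ₀, ∃ A : (n : ℕ) → Set (Fin (n + 1) → Y),
    (∀ n, MeasurableSet (A n)) ∧
    0 < Filter.liminf (fun n : ℕ => (M.PY θ₀ (cyl n (A n))).toReal) atTop ∧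
    Filter.limsup (fun n : ℕ =>
      (1 / (n : ℝ)) * Real.log ((M.PY θ (cyl n (A n))).toReal)) atTop < 0

/-- An approximate maximum likelihood estimator: a sequence of measurable maps
`est n : Y^{n+1} → Θ` with `(1/n) log p_{est n (Y₀ⁿ)}(Y₀ⁿ) ≥ sup_θ (1/n) log p_θ(Y₀ⁿ) − o_{a.s.}(1)`
under `P_{θ₀}`. -/
def IsApproxMLE [MeasurableSpace Θ] (M : DynModel Θ X Y) (θ₀ : Θ)
    (est : ℕ → (ℕ → Y) → Θ) : Prop :=
  (∀ n, Measurable (est n)) ∧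
  (∀ (n : ℕ) (y y' : ℕ → Y), (∀ i ≤ n, y i = y' i) → est n y = est n y') ∧
  ∃ ε : ℕ → X × (ℕ → Y) → ℝ,
    (∀ᵐ ω ∂(M.P θ₀), Tendsto (fun n => ε n ω) atTop (𝓝 (0 : ℝ))) ∧
    ∀ (ω : X × (ℕ → Y)) (n : ℕ) (θ : Θ),
      (1 / (n : ℝ)) * Real.log (M.p θ n ω.2) ≤
        (1 / (n : ℝ)) * Real.log (M.p (est n ω.2) n ω.2) + ε n ω

/-- Consistency at `θ₀`: the estimates converge to the equivalence class `[θ₀]`,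
`P_{θ₀}`-almost surely. -/
def ConsistentAt [PseudoMetricSpace Θ] (M : DynModel Θ X Y) (θ₀ : Θ)
    (est : ℕ → (ℕ → Y) → Θ) : Prop :=
  ∀ᵐ ω ∂(M.P θ₀),
    Tendsto (fun n => Metric.infDist (est n ω.2) (M.cls θ₀)) atTop (𝓝 (0 : ℝ))

/-- Maximum likelihood estimation is consistent for the model: every approximate MLE
is consistent at the true parameter. -/
def MLEConsistent [MetricSpace Θ] [MeasurableSpace Θ] (M : DynModel Θ X Y) : Prop :=
  ∀ (θ₀ : Θ) (est : ℕ → (ℕ → Y) → Θ), M.IsApproxMLE θ₀ est → M.ConsistentAt θ₀ est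

end DynModel

open DynModel

variable {Θ X Y : Type*}
  [MetricSpace Θ] [CompactSpace Θ] [MeasurableSpace Θ] [BorelSpace Θ]
  [MetricSpace X] [CompleteSpace X] [SecondCountableTopology X]
  [MeasurableSpace X] [BorelSpace X]
  [MetricSpace Y] [CompleteSpace Y] [SecondCountableTopology Y]
  [MeasurableSpace Y] [BorelSpace Y]


section AuxObs
open MeasureTheory ProbabilityTheory Set Function

section ObsAux

lemma aux_countable_generatePiSystem {α : Type*} {S : Set (Set α)} (hS : S.Countable) :
    (generatePiSystem S).Countable := by
  have hsub : generatePiSystem S ⊆ sInter '' {t : Set (Set α) | t.Finite ∧ t ⊆ S} := by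
    intro u hu
    induction hu with
    | base h =>
        exact ⟨{_}, ⟨Set.finite_singleton _, Set.singleton_subset_iff.2 h⟩, by simp⟩
    | inter hs ht hnon ihs iht =>
        obtain ⟨vs, ⟨hvsf, hvss⟩, rfl⟩ := ihs
        obtain ⟨vt, ⟨hvtf, hvts⟩, rfl⟩ := iht
        exact ⟨vs ∪ vt, ⟨hvsf.union hvtf, Set.union_subset hvss hvts⟩,
          by rw [Set.sInter_union]⟩
  exact ((Set.countable_setOf_finite_subset hS).image _).mono hsub

lemma aux_lintegral_box {Y : Type*} [MeasurableSpace Y] (ν : Measure Y) [SigmaFinite ν] :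
    ∀ (n : ℕ) (f : Fin n → Y → ENNReal), (∀ j, Measurable (f j)) →
      ∀ (t : Fin n → Set Y), (∀ j, MeasurableSet (t j)) →
      ∫⁻ w in Set.univ.pi t, ∏ j, f j (w j) ∂(Measure.pi fun _ => ν) =
        ∏ j, ∫⁻ y in t j, f j y ∂ν := by
  intro n
  induction n with
  | zero =>
      intro f hf t ht
      have h1 : Set.univ.pi t = Set.univ := by
        ext w
        simp only [Set.mem_pi, Set.mem_univ, true_implies, iff_true]
        exact fun i => i.elim0
      rw [h1, Measure.restrict_univ, Measure.pi_of_empty (fun _ => ν)]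
      simp
  | succ n ih =>
      intro f hf t ht
      have hmp := measurePreserving_piFinSuccAbove (fun _ : Fin (n + 1) => ν) 0
      set e := MeasurableEquiv.piFinSuccAbove (fun _ : Fin (n + 1) => Y) 0 with he
      have hsymm : ∀ (y : Y) (v : Fin n → Y),
          e.symm (y, v) = Fin.cons (α := fun _ => Y) y v := by
        intro y v
        funext j
        induction j using Fin.cases with
        | zero => rfl
        | succ i => rfl
      have hpre : ⇑e.symm ⁻¹' (Set.univ.pi t) =
          (t 0) ×ˢ (Set.univ.pi fun j : Fin n => t j.succ) := by
        ext ⟨y, v⟩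
        simp only [Set.mem_preimage, Set.mem_pi, Set.mem_univ, true_implies, Set.mem_prod,
          hsymm y v]
        rw [Fin.forall_fin_succ]
        simp [Fin.cons_zero, Fin.cons_succ]
      have hcomp : ∀ (y : Y) (v : Fin n → Y),
          (∏ j, f j (e.symm (y, v) j)) = f 0 y * ∏ j, f j.succ (v j) := by
        intro y v
        rw [hsymm y v, Fin.prod_univ_succ, Fin.cons_zero]
        refine congrArg _ (Finset.prod_congr rfl fun j _ => ?_)
        rw [Fin.cons_succ]
      have hemb : MeasurableEmbedding (⇑e.symm) := e.symm.measurableEmbedding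
      rw [← (MeasurePreserving.symm e hmp).setLIntegral_comp_preimage_emb hemb, hpre]
      have : ∀ p : Y × (Fin n → Y), (∏ j, f j (e.symm p j)) =
          f 0 p.1 * ∏ j, f j.succ (p.2 j) := fun p => hcomp p.1 p.2
      rw [lintegral_congr this]
      rw [← Measure.prod_restrict]
      have hg1 : AEMeasurable (fun y => f 0 y) (ν.restrict (t 0)) := (hf 0).aemeasurable
      have hg2 : AEMeasurable (fun v : Fin n → Y => ∏ j, f j.succ (v j))
          ((Measure.pi fun _ : Fin n => ν).restrict (Set.univ.pi fun j : Fin n => t j.succ)) :=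
        (Finset.measurable_prod Finset.univ
          (fun j _ => (hf j.succ).comp (measurable_pi_apply j))).aemeasurable
      rw [lintegral_prod_mul hg1 hg2]
      rw [ih (fun j => f j.succ) (fun j => hf j.succ) (fun j => t j.succ) (fun j => ht j.succ)]
      rw [Fin.prod_univ_succ]


section Cyl

variable {Y : Type*}

lemma aux_mem_cyl_pi {n : ℕ} (t : Fin (n + 1) → Set Y) (y : ℕ → Y) :
    y ∈ DynModel.cyl n (Set.univ.pi t) ↔ ∀ j : Fin (n + 1), y j.val ∈ t j := by
  simp [DynModel.cyl, Set.mem_pi]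

lemma aux_cyl_eq_preimage (n : ℕ) (B : Set (Fin (n + 1) → Y)) :
    DynModel.cyl n B = (fun (y : ℕ → Y) (i : Fin (n + 1)) => y i.val) ⁻¹' B := rfl

lemma aux_measurable_cyl [MeasurableSpace Y] {n : ℕ} {B : Set (Fin (n + 1) → Y)}
    (hB : MeasurableSet B) : MeasurableSet (DynModel.cyl n B) := by
  rw [aux_cyl_eq_preimage]
  exact measurable_pi_lambda (fun (y : ℕ → Y) (i : Fin (n + 1)) => y i.val)
    (fun i => measurable_pi_apply i.val) hB

lemma aux_shift_cyl (n : ℕ) (t : Fin (n + 1) → Set Y) :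
    (fun (y : ℕ → Y) (i : ℕ) => y (i + 1)) ⁻¹' DynModel.cyl n (Set.univ.pi t) =
      DynModel.cyl (n + 1) (Set.univ.pi (Fin.cons (α := fun _ => Set Y) Set.univ t)) := by
  ext y
  simp only [Set.mem_preimage, aux_mem_cyl_pi]
  constructor
  · intro h j
    induction j using Fin.cases with
    | zero => simp
    | succ i => simpa [Fin.cons_succ, Fin.val_succ] using h i
  · intro h i
    have := h i.succ
    simpa [Fin.cons_succ, Fin.val_succ] using this

/-- Extension of a finite tuple of sets to an `ℕ`-indexed family by `univ`. -/
def extSet {n : ℕ} (t : Fin (n + 1) → Set Y) : ℕ → Set Y :=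
  fun i => if h : i < n + 1 then t ⟨i, h⟩ else Set.univ

lemma aux_mem_cyl_extSet {n : ℕ} (t : Fin (n + 1) → Set Y) (y : ℕ → Y) :
    y ∈ DynModel.cyl n (Set.univ.pi t) ↔ ∀ i : ℕ, y i ∈ extSet t i := by
  rw [aux_mem_cyl_pi]
  constructor
  · intro h i
    unfold extSet
    split_ifs with hi
    · exact h ⟨i, hi⟩
    · trivial
  · intro h j
    have := h j.val
    unfold extSet at this
    rw [dif_pos j.isLt] at this
    simpa using this

lemma aux_extSet_ge {n : ℕ} (t : Fin (n + 1) → Set Y) {i : ℕ} (hi : ¬ i < n + 1) :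
    extSet t i = Set.univ := dif_neg hi

end Cyl

section PiSys

open MeasurableSpace

variable (Y : Type*) [MeasurableSpace Y] [CountablyGenerated Y]

/-- A countable π-system generating the σ-algebra of `Y`, containing `univ`. -/
def obsDsys : Set (Set Y) :=
  generatePiSystem (insert Set.univ (countableGeneratingSet Y))

lemma obsDsys_countable : (obsDsys Y).Countable :=
  aux_countable_generatePiSystem ((countable_countableGeneratingSet).insert _)

lemma obsDsys_isPiSystem : IsPiSystem (obsDsys Y) := isPiSystem_generatePiSystem _

lemma obsDsys_univ_mem : Set.univ ∈ obsDsys Y :=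
  generatePiSystem.base (Set.mem_insert _ _)

lemma obsDsys_measurableSet {S : Set Y} (hS : S ∈ obsDsys Y) : MeasurableSet S := by
  refine generatePiSystem_measurableSet (fun s hs => ?_) S hS
  rcases hs with rfl | hs
  · exact MeasurableSet.univ
  · exact measurableSet_countableGeneratingSet hs

lemma obsDsys_generateFrom :
    generateFrom (obsDsys Y) = (inferInstance : MeasurableSpace Y) := by
  rw [obsDsys, generateFrom_generatePiSystem_eq, MeasurableSpace.generateFrom_insert_univ,
    generateFrom_countableGeneratingSet]

/-- The countable π-system of box cylinders on `ℕ → Y` with sides in `obsDsys`. -/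
def obsCylSys : Set (Set (ℕ → Y)) :=
  {S | ∃ (n : ℕ) (t : Fin (n + 1) → Set Y),
    (∀ j, t j ∈ obsDsys Y) ∧ S = DynModel.cyl n (Set.univ.pi t)}

lemma obsCylSys_countable : (obsCylSys Y).Countable := by
  have : obsCylSys Y ⊆ ⋃ n : ℕ, (fun t : Fin (n + 1) → Set Y =>
      DynModel.cyl n (Set.univ.pi t)) '' {t | ∀ j, t j ∈ obsDsys Y} := by
    rintro S ⟨n, t, ht, rfl⟩
    exact Set.mem_iUnion.2 ⟨n, ⟨t, ht, rfl⟩⟩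
  refine Set.Countable.mono this (Set.countable_iUnion fun n => Set.Countable.image ?_ _)
  exact Set.countable_pi fun _ => obsDsys_countable Y

lemma obsCylSys_isPiSystem : IsPiSystem (obsCylSys Y) := by
  rintro S₁ ⟨n, t, ht, rfl⟩ S₂ ⟨m, t', ht', rfl⟩ hne
  obtain ⟨y, hy₁, hy₂⟩ := hne
  rw [aux_mem_cyl_extSet] at hy₁ hy₂
  set N := max n m with hN
  have hnN : n + 1 ≤ N + 1 := Nat.succ_le_succ (le_max_left n m)
  have hmN : m + 1 ≤ N + 1 := Nat.succ_le_succ (le_max_right n m)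
  refine ⟨N, fun j => extSet t j.val ∩ extSet t' j.val, fun j => ?_, ?_⟩
  · refine obsDsys_isPiSystem Y _ ?_ _ ?_ ⟨y j.val, hy₁ j.val, hy₂ j.val⟩
    · unfold extSet
      split_ifs with h
      · exact ht _
      · exact obsDsys_univ_mem Y
    · unfold extSet
      split_ifs with h
      · exact ht' _
      · exact obsDsys_univ_mem Y
  · ext z
    simp only [Set.mem_inter_iff, aux_mem_cyl_extSet]
    constructor
    · rintro ⟨h₁, h₂⟩ i
      unfold extSet
      split_ifs with hi
      · exact ⟨h₁ i, h₂ i⟩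
      · trivial
    · intro h
      constructor
      · intro i
        by_cases hi : i < N + 1
        · have := h i
          simp only [extSet] at this
          rw [dif_pos hi] at this
          exact this.1
        · rw [aux_extSet_ge t (fun hc => hi (lt_of_lt_of_le hc hnN))]
          trivial
      · intro i
        by_cases hi : i < N + 1
        · have := h i
          simp only [extSet] at this
          rw [dif_pos hi] at this
          exact this.2
        · rw [aux_extSet_ge t' (fun hc => hi (lt_of_lt_of_le hc hmN))]
          trivial

lemma obsCylSys_generateFrom :
    generateFrom (obsCylSys Y) = (inferInstance : MeasurableSpace (ℕ → Y)) := by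
  refine le_antisymm ?_ ?_
  · rw [generateFrom_le_iff]
    rintro S ⟨n, t, ht, rfl⟩
    exact aux_measurable_cyl (MeasurableSet.univ_pi fun j => obsDsys_measurableSet Y (ht j))
  · have hpi : (inferInstance : MeasurableSpace (ℕ → Y)) =
        ⨆ i : ℕ, MeasurableSpace.comap (fun y : ℕ → Y => y i) inferInstance := rfl
    rw [hpi]
    refine iSup_le fun i => ?_
    rw [← obsDsys_generateFrom Y, comap_generateFrom, generateFrom_le_iff]
    rintro S ⟨E, hE, rfl⟩
    apply measurableSet_generateFrom
    refine ⟨i, fun j => if (j : ℕ) = i then E else Set.univ, fun j => ?_, ?_⟩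
    · dsimp only
      split_ifs
      · exact hE
      · exact obsDsys_univ_mem Y
    · ext y
      simp only [Set.mem_preimage, aux_mem_cyl_pi]
      constructor
      · intro h j
        split_ifs with hj
        · rwa [hj]
        · trivial
      · intro h
        have := h (Fin.last i)
        simpa using this

end PiSys

end ObsAux



section BoxFn

open MeasureTheory ProbabilityTheory Set Function

variable {X Y : Type*} [MeasurableSpace X] [MeasurableSpace Y]

/-- The product over a box of one-step observation integrals. -/
def boxFn (ν : Measure Y) (T : X → X) (g : X → Y → ℝ) (n : ℕ)
    (t : Fin (n + 1) → Set Y) (x : X) : ENNReal :=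
  ∏ j : Fin (n + 1), ∫⁻ y in t j, ENNReal.ofReal (g (T^[(j : ℕ)] x) y) ∂ν

lemma boxFn_measurable (ν : Measure Y) [SigmaFinite ν] {T : X → X} {g : X → Y → ℝ}
    (hT : Measurable T) (hg : Measurable (Function.uncurry g)) (n : ℕ)
    (t : Fin (n + 1) → Set Y) : Measurable (boxFn ν T g n t) := by
  refine Finset.measurable_prod _ fun j _ => ?_
  have hm : Measurable fun p : X × Y => ENNReal.ofReal (g (T^[(j : ℕ)] p.1) p.2) :=
    ENNReal.measurable_ofReal.comp (hg.comp (((hT.iterate (j : ℕ)).comp measurable_fst).prodMk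
      measurable_snd))
  exact hm.lintegral_prod_right'

lemma boxFn_univ {ν : Measure Y} {T : X → X} {g : X → Y → ℝ}
    (hnorm : ∀ x, ∫⁻ y, ENNReal.ofReal (g x y) ∂ν = 1) (n : ℕ) (x : X) :
    boxFn ν T g n (fun _ => Set.univ) x = 1 := by
  unfold boxFn
  rw [Finset.prod_eq_one]
  intro j _
  rw [Measure.restrict_univ]
  exact hnorm _

lemma boxFn_cons {ν : Measure Y} {T : X → X} {g : X → Y → ℝ}
    (hnorm : ∀ x, ∫⁻ y, ENNReal.ofReal (g x y) ∂ν = 1) (n : ℕ)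
    (t : Fin (n + 1) → Set Y) (x : X) :
    boxFn ν T g (n + 1) (Fin.cons (α := fun _ => Set Y) Set.univ t) x =
      boxFn ν T g n t (T x) := by
  unfold boxFn
  rw [Fin.prod_univ_succ]
  have h0 : (∫⁻ y in (Fin.cons (α := fun _ => Set Y) Set.univ t) 0,
      ENNReal.ofReal (g (T^[((0 : Fin (n + 2)) : ℕ)] x) y) ∂ν) = 1 := by
    rw [Fin.cons_zero, Measure.restrict_univ]
    exact hnorm _
  rw [h0, one_mul]
  refine Finset.prod_congr rfl fun j _ => ?_
  rw [Fin.cons_succ]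
  congr 1

lemma boxFn_finset {ν : Measure Y} {T : X → X} {g : X → Y → ℝ}
    (hnorm : ∀ x, ∫⁻ y, ENNReal.ofReal (g x y) ∂ν = 1) (s : Finset ℕ) (n : ℕ)
    (hn : ∀ i ∈ s, i < n + 1) (S : ℕ → Set Y) (x : X) :
    boxFn ν T g n (fun j => if (j : ℕ) ∈ s then S (j : ℕ) else Set.univ) x =
      ∏ i ∈ s, ∫⁻ y in S i, ENNReal.ofReal (g (T^[i] x) y) ∂ν := by
  classical
  unfold boxFn
  have h1 : ∀ j : Fin (n + 1),
      (∫⁻ y in (if (j : ℕ) ∈ s then S (j : ℕ) else Set.univ),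
        ENNReal.ofReal (g (T^[(j : ℕ)] x) y) ∂ν) =
      if (j : ℕ) ∈ s then (∫⁻ y in S (j : ℕ), ENNReal.ofReal (g (T^[(j : ℕ)] x) y) ∂ν)
        else 1 := by
    intro j
    split_ifs with h
    · rfl
    · rw [Measure.restrict_univ]; exact hnorm _
  rw [Finset.prod_congr rfl fun j _ => h1 j, ← Finset.prod_filter]
  refine Finset.prod_nbij (fun j => (j : ℕ)) ?_ ?_ ?_ ?_
  · intro j hj
    simpa using (Finset.mem_filter.1 hj).2
  · intro a ha b hb hab
    exact Fin.val_injective hab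
  · intro i hi
    simp only [Finset.coe_filter, Finset.mem_coe, Set.mem_image, Set.mem_setOf_eq]
    exact ⟨⟨i, hn i hi⟩, by simpa using hi, rfl⟩
  · intro j hj
    rfl

lemma aux_cyl_finset (s : Finset ℕ) (n : ℕ) (hn : ∀ i ∈ s, i < n + 1) (S : ℕ → Set Y) :
    DynModel.cyl n (Set.univ.pi
        (fun j : Fin (n + 1) => if (j : ℕ) ∈ s then S (j : ℕ) else Set.univ)) =
      ⋂ i ∈ s, (fun y : ℕ → Y => y i) ⁻¹' S i := by
  classical
  ext y
  simp only [aux_mem_cyl_pi, Set.mem_iInter, Set.mem_preimage]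
  constructor
  · intro h i hi
    have := h ⟨i, hn i hi⟩
    simpa [hi] using this
  · intro h j
    by_cases hj : (j : ℕ) ∈ s
    · simpa [hj] using h _ hj
    · simp [hj]

end BoxFn


/-- If `(T_{θ₀}, μ_{θ₀})` is ergodic, then the observation process is
stationary and ergodic under `P^Y_{θ₀}`: the left shift on `Y^ℕ` preserves `P^Y_{θ₀}`
and is ergodic with respect to it. -/
theorem observation_process_ergodic
    (M : DynModel Θ X Y) (θ₀ : Θ) (hM : M.IsModel) (h1 : M.S1 θ₀) :
    MeasureTheory.MeasurePreserving (fun (y : ℕ → Y) (i : ℕ) => y (i + 1))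
      (M.PY θ₀) (M.PY θ₀) ∧
    Ergodic (fun (y : ℕ → Y) (i : ℕ) => y (i + 1)) (M.PY θ₀) := by
  classical
  obtain ⟨hTm, hμp, hTmp, hνsf, hgm, hgnn, hgint, hPp, hPcyl⟩ := hM
  haveI := hνsf
  haveI := hμp θ₀
  haveI := hPp θ₀
  set ν : Measure Y := M.ν with hν
  set T : X → X := M.T θ₀ with hT
  set g : X → Y → ℝ := M.g θ₀ with hg
  set μ0 : Measure X := M.μ θ₀ with hμ0
  set P : Measure (X × (ℕ → Y)) := M.P θ₀ with hP
  set σf : (ℕ → Y) → (ℕ → Y) := fun y i => y (i + 1) with hσf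
  have hσm : Measurable σf := measurable_pi_lambda _ fun i => measurable_pi_apply _
  have hTm' : Measurable T := hTm θ₀
  have hgm' : Measurable (Function.uncurry g) := hgm θ₀
  have hTmp' : MeasurePreserving T μ0 μ0 := hTmp θ₀
  have hErg : Ergodic T μ0 := h1
  have hnorm : ∀ x, ∫⁻ y, ENNReal.ofReal (g x y) ∂ν = 1 := by
    intro x
    have hint : Integrable (fun y => g x y) ν := by
      by_contra hc
      have h2 := hgint θ₀ x
      rw [integral_undef hc] at h2
      norm_num at h2
    rw [← ofReal_integral_eq_lintegral_ofReal hint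
      (Filter.Eventually.of_forall fun y => hgnn θ₀ x y), hgint θ₀ x, ENNReal.ofReal_one]
  have hbm : ∀ (n : ℕ) (t : Fin (n + 1) → Set Y), (∀ j, MeasurableSet (t j)) →
      MeasurableSet (DynModel.cyl n (Set.univ.pi t)) := fun n t ht =>
    aux_measurable_cyl (MeasurableSet.univ_pi ht)
  have hboxm : ∀ (n : ℕ) (t : Fin (n + 1) → Set Y), Measurable (boxFn ν T g n t) :=
    fun n t => boxFn_measurable ν hTm' hgm' n t
  have hPbox : ∀ (n : ℕ) (A : Set X), MeasurableSet A →
      ∀ (t : Fin (n + 1) → Set Y), (∀ j, MeasurableSet (t j)) →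
      P (A ×ˢ DynModel.cyl n (Set.univ.pi t)) = ∫⁻ x in A, boxFn ν T g n t x ∂μ0 := by
    intro n A hA t ht
    rw [hPcyl θ₀ n A (Set.univ.pi t) hA (MeasurableSet.univ_pi ht)]
    refine lintegral_congr fun x => ?_
    exact aux_lintegral_box ν (n + 1)
      (fun j y => ENNReal.ofReal (g (T^[(j : ℕ)] x) y))
      (fun j => ENNReal.measurable_ofReal.comp (hgm'.comp measurable_prodMk_left))
      t ht
  have hPYdef : M.PY θ₀ = P.map Prod.snd := rfl
  have hPYapp : ∀ S : Set (ℕ → Y), MeasurableSet S →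
      M.PY θ₀ S = P (Set.univ ×ˢ S) := by
    intro S hS
    rw [hPYdef, Measure.map_apply measurable_snd hS]
    congr 1
    ext p
    simp
  haveI : IsProbabilityMeasure (M.PY θ₀) := by
    rw [hPYdef]; exact Measure.isProbabilityMeasure_map measurable_snd.aemeasurable
  have hshift_box : ∀ (n : ℕ) (t : Fin (n + 1) → Set Y), (∀ j, MeasurableSet (t j)) →
      M.PY θ₀ (σf ⁻¹' DynModel.cyl n (Set.univ.pi t)) =
        M.PY θ₀ (DynModel.cyl n (Set.univ.pi t)) := by
    intro n t ht
    have hconsm : ∀ j, MeasurableSet ((Fin.cons (α := fun _ => Set Y) Set.univ t) j) := by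
      intro j
      induction j using Fin.cases with
      | zero => simpa using MeasurableSet.univ
      | succ i => simpa [Fin.cons_succ] using ht i
    rw [hσf, aux_shift_cyl, hPYapp _ (hbm _ _ hconsm),
      hPbox (n + 1) _ MeasurableSet.univ _ hconsm,
      hPYapp _ (hbm n t ht), hPbox n _ MeasurableSet.univ t ht]
    simp only [Measure.restrict_univ]
    calc ∫⁻ x, boxFn ν T g (n + 1) (Fin.cons (α := fun _ => Set Y) Set.univ t) x ∂μ0
        = ∫⁻ x, boxFn ν T g n t (T x) ∂μ0 :=
          lintegral_congr fun x => boxFn_cons hnorm n t x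
      _ = ∫⁻ x, boxFn ν T g n t x ∂μ0 := hTmp'.lintegral_comp (hboxm n t)
  have hmp : MeasurePreserving σf (M.PY θ₀) (M.PY θ₀) := by
    refine ⟨hσm, ?_⟩
    haveI : IsProbabilityMeasure ((M.PY θ₀).map σf) :=
      Measure.isProbabilityMeasure_map hσm.aemeasurable
    refine ext_of_generate_finite (obsCylSys Y) (obsCylSys_generateFrom Y).symm
      (obsCylSys_isPiSystem Y) ?_ (by rw [measure_univ, measure_univ])
    rintro S ⟨n, t, htD, rfl⟩
    have ht : ∀ j, MeasurableSet (t j) := fun j => obsDsys_measurableSet Y (htD j)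
    rw [Measure.map_apply hσm (hbm n t ht)]
    exact hshift_box n t ht
  -- the conditional kernel
  haveI hXne : Nonempty X := by
    by_contra hc
    have h2 := measure_univ (μ := μ0)
    rw [Set.univ_eq_empty_iff.2 (not_nonempty_iff.1 hc), measure_empty] at h2
    exact zero_ne_one h2
  haveI hYne : Nonempty Y := by
    by_contra hc
    haveI := not_nonempty_iff.1 hc
    obtain ⟨x⟩ := hXne
    have h2 := hgint θ₀ x
    rw [show (ν : Measure Y) = 0 from Measure.eq_zero_of_isEmpty ν,
      integral_zero_measure] at h2
    exact zero_ne_one h2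
  set κ : ProbabilityTheory.Kernel X (ℕ → Y) := P.condKernel with hκ
  haveI hκmk : ProbabilityTheory.IsMarkovKernel κ := by rw [hκ]; infer_instance
  haveI hκck : P.IsCondKernel κ := by rw [hκ]; infer_instance
  have hfst : P.fst = μ0 := by
    refine Measure.ext fun s hs => ?_
    rw [Measure.fst_apply hs]
    have hsets : (Prod.fst ⁻¹' s : Set (X × (ℕ → Y))) = s ×ˢ Set.univ := Set.prod_univ.symm
    have huniv : (Set.univ : Set (ℕ → Y)) =
        DynModel.cyl 0 (Set.univ.pi fun _ : Fin 1 => Set.univ) :=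
      (Set.eq_univ_of_forall fun y => (aux_mem_cyl_pi _ y).2 fun j => Set.mem_univ _).symm
    rw [hsets, huniv, hPbox 0 s hs _ (fun _ => MeasurableSet.univ),
      show (boxFn ν T g 0 fun _ : Fin 1 => Set.univ) = fun _ => (1 : ENNReal) from
        funext fun x => boxFn_univ hnorm 0 x,
      setLIntegral_one]
  have hdis : (μ0 ⊗ₘ κ) = P := by rw [← hfst]; exact P.disintegrate κ
  have hPprod2 : ∀ (A : Set X) (S : Set (ℕ → Y)), MeasurableSet A → MeasurableSet S →
      P (A ×ˢ S) = ∫⁻ x in A, κ x S ∂μ0 := by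
    intro A S hA hS
    rw [← hdis, Measure.compProd_apply_prod hA hS]
  have hκbox : ∀ (n : ℕ) (t : Fin (n + 1) → Set Y), (∀ j, MeasurableSet (t j)) →
      ∀ᵐ x ∂μ0, κ x (DynModel.cyl n (Set.univ.pi t)) = boxFn ν T g n t x := by
    intro n t ht
    refine ae_eq_of_forall_setLIntegral_eq_of_sigmaFinite
      (κ.measurable_coe (hbm n t ht)) (hboxm n t) (fun A hA _ => ?_)
    rw [← hPprod2 A _ hA (hbm n t ht), hPbox n A hA t ht]
  have hgood : ∀ᵐ x ∂μ0, ∀ (n : ℕ),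
      ∀ t ∈ {t : Fin (n + 1) → Set Y | ∀ j, t j ∈ obsDsys Y},
      κ x (DynModel.cyl n (Set.univ.pi t)) = boxFn ν T g n t x := by
    rw [ae_all_iff]
    intro n
    rw [ae_ball_iff (Set.countable_pi fun _ => obsDsys_countable Y)]
    intro t ht
    exact hκbox n t fun j => obsDsys_measurableSet Y (ht j)
  have hgoodT : ∀ᵐ x ∂μ0, ∀ (n : ℕ),
      ∀ t ∈ {t : Fin (n + 1) → Set Y | ∀ j, t j ∈ obsDsys Y},
      κ (T x) (DynModel.cyl n (Set.univ.pi t)) = boxFn ν T g n t (T x) :=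
    hTmp'.quasiMeasurePreserving.ae hgood
  have hmapshift : ∀ᵐ x ∂μ0, (κ x).map σf = κ (T x) := by
    filter_upwards [hgood, hgoodT] with x hx hxT
    haveI : IsProbabilityMeasure ((κ x).map σf) :=
      Measure.isProbabilityMeasure_map hσm.aemeasurable
    refine ext_of_generate_finite (obsCylSys Y) (obsCylSys_generateFrom Y).symm
      (obsCylSys_isPiSystem Y) ?_ (by rw [measure_univ, measure_univ])
    rintro S ⟨n, t, htD, rfl⟩
    have ht : ∀ j, MeasurableSet (t j) := fun j => obsDsys_measurableSet Y (htD j)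
    have hconsD : ∀ j, (Fin.cons (α := fun _ => Set Y) Set.univ t) j ∈ obsDsys Y := by
      intro j
      induction j using Fin.cases with
      | zero => simpa using obsDsys_univ_mem Y
      | succ i => simpa [Fin.cons_succ] using htD i
    rw [Measure.map_apply hσm (hbm n t ht), hσf, aux_shift_cyl,
      hx (n + 1) _ hconsD, boxFn_cons hnorm n t x, hxT n t htD]
  have hindep : ∀ᵐ x ∂μ0, ProbabilityTheory.iIndep
      (fun i : ℕ => MeasurableSpace.comap (fun y : ℕ → Y => y i) inferInstance) (κ x) := by
    filter_upwards [hgood] with x hx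
    refine ProbabilityTheory.iIndepSets.iIndep
      (fun i => (measurable_pi_apply i).comap_le)
      (fun i => (fun S : Set Y => (fun y : ℕ → Y => y i) ⁻¹' S) '' obsDsys Y)
      (fun i => ?_) (fun i => ?_) ?_
    · rintro _ ⟨S, hS, rfl⟩ _ ⟨S', hS', rfl⟩ hne
      rw [← Set.preimage_inter]
      refine ⟨S ∩ S', ?_, rfl⟩
      obtain ⟨y, hy⟩ := hne
      exact obsDsys_isPiSystem Y S hS S' hS' ⟨y i, hy⟩
    · rw [← obsDsys_generateFrom Y, MeasurableSpace.comap_generateFrom]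
    · rw [ProbabilityTheory.iIndepSets_iff]
      intro s f hf
      choose Sf hSf1 hSf2 using hf
      set S' : ℕ → Set Y := fun i => if h : i ∈ s then Sf i h else Set.univ with hS'
      have hS'D : ∀ i, S' i ∈ obsDsys Y := by
        intro i
        by_cases h : i ∈ s
        · simp only [hS', dif_pos h]; exact hSf1 i h
        · simp only [hS', dif_neg h]; exact obsDsys_univ_mem Y
      have hfeq : ∀ i ∈ s, f i = (fun y : ℕ → Y => y i) ⁻¹' S' i := by
        intro i hi
        rw [← hSf2 i hi]
        simp only [hS', dif_pos hi]
      have key : ∀ s' : Finset ℕ,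
          κ x (⋂ i ∈ s', (fun y : ℕ → Y => y i) ⁻¹' S' i) =
            ∏ i ∈ s', ∫⁻ y in S' i, ENNReal.ofReal (g (T^[i] x) y) ∂ν := by
        intro s'
        set m := s'.sup id with hm
        have hmlt : ∀ i ∈ s', i < m + 1 :=
          fun i hi => Nat.lt_succ_of_le (Finset.le_sup (f := id) hi)
        have hmem : ∀ j : Fin (m + 1),
            (if ((j : ℕ)) ∈ s' then S' (j : ℕ) else Set.univ) ∈ obsDsys Y := by
          intro j
          split_ifs
          · exact hS'D _
          · exact obsDsys_univ_mem Y
        rw [← aux_cyl_finset s' m hmlt S', hx m _ hmem,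
          boxFn_finset hnorm s' m hmlt S' x]
      calc κ x (⋂ i ∈ s, f i)
          = κ x (⋂ i ∈ s, (fun y : ℕ → Y => y i) ⁻¹' S' i) := by
            congr 1; exact Set.iInter₂_congr hfeq
        _ = ∏ i ∈ s, ∫⁻ y in S' i, ENNReal.ofReal (g (T^[i] x) y) ∂ν := key s
        _ = ∏ i ∈ s, κ x (f i) := by
            refine Finset.prod_congr rfl fun i hi => ?_
            have hone := key {i}
            simp only [Finset.prod_singleton, Finset.set_biInter_singleton] at hone
            rw [hfeq i hi, hone]
  refine ⟨hmp, hmp, ⟨fun E hE hEinv => ?_⟩⟩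
  have hEiter : ∀ k : ℕ, (σf^[k]) ⁻¹' E = E := by
    intro k
    induction k with
    | zero => simp
    | succ k ih =>
        rw [Function.iterate_succ', Set.preimage_comp, hEinv, ih]
  have hσiter : ∀ (k : ℕ) (y : ℕ → Y) (i : ℕ), (σf^[k]) y i = y (i + k) := by
    intro k
    induction k with
    | zero => intro y i; simp
    | succ k ih =>
        intro y i
        rw [Function.iterate_succ_apply, ih (σf y) i]
        show y ((i + k) + 1) = y (i + (k + 1))
        rw [Nat.add_assoc]
  have htail : MeasurableSet[Filter.limsup
      (fun i : ℕ => MeasurableSpace.comap (fun y : ℕ → Y => y i) inferInstance)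
      Filter.atTop] E := by
    rw [Filter.limsup_eq_iInf_iSup_of_nat, MeasurableSpace.measurableSet_iInf]
    intro k
    have hmeas : @Measurable (ℕ → Y) (ℕ → Y)
        (⨆ i, ⨆ (_ : i ≥ k), MeasurableSpace.comap (fun y : ℕ → Y => y i) inferInstance)
        MeasurableSpace.pi (σf^[k]) := by
      refine (@measurable_pi_iff (ℕ → Y) ℕ (fun _ => Y)
        (⨆ i, ⨆ (_ : i ≥ k), MeasurableSpace.comap (fun y : ℕ → Y => y i) inferInstance)
        (fun _ => inferInstance) (σf^[k])).mpr ?_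
      intro a
      have h2 : (fun y : ℕ → Y => (σf^[k]) y a) = fun y : ℕ → Y => y (a + k) :=
        funext fun y => hσiter k y a
      rw [h2]
      have hc : Measurable[MeasurableSpace.comap (fun y : ℕ → Y => y (a + k)) inferInstance]
          (fun y : ℕ → Y => y (a + k)) := measurable_iff_comap_le.mpr le_rfl
      exact hc.mono (le_iSup₂_of_le (a + k) (Nat.le_add_left k a) le_rfl) le_rfl
    rw [← hEiter k]
    exact hmeas hE
  have h01 : ∀ᵐ x ∂μ0, κ x E = 0 ∨ κ x E = 1 := by
    filter_upwards [hindep] with x hx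
    exact ProbabilityTheory.measure_zero_or_one_of_measurableSet_limsup_atTop
      (fun i => (measurable_pi_apply i).comap_le) hx htail
  have hcomp : (fun x => κ (T x) E) =ᵐ[μ0] fun x => κ x E := by
    filter_upwards [hmapshift] with x hx
    rw [← hx, Measure.map_apply hσm hE, hEinv]
  obtain ⟨c, hc⟩ := hErg.ae_eq_const_of_ae_eq_comp₀
    ((κ.measurable_coe hE).nullMeasurable) hcomp
  haveI : (ae μ0).NeBot := ae_neBot.mpr (IsProbabilityMeasure.ne_zero (μ := μ0))
  obtain ⟨x0, hx1, hx2⟩ := (hc.and h01).exists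
  have hPYE : M.PY θ₀ E = c := by
    rw [hPYapp E hE, hPprod2 Set.univ E MeasurableSet.univ hE, Measure.restrict_univ,
      lintegral_congr_ae hc]
    simp
  rw [Filter.eventuallyConst_set']
  rcases hx2 with h0 | h0
  · left
    rw [ae_eq_empty, hPYE]
    exact hx1.symm.trans h0
  · right
    rw [ae_eq_univ, prob_compl_eq_zero_iff hE, hPYE]
    exact hx1.symm.trans h0
end AuxObs
end
end

section
/- Suppose that X and Θ are compact metric spaces, and the maps T : Θ × X → X and g : Θ × X × Y → ℝ₊ are continuous. If the family (T_θ, μ_θ)_{θ∈Θ} has statistical stability (i.e., θ ↦ μ_θ is continuous with respect to the topology of weak convergence on the space of Borel probability measures on X), then the upper semi-continuity of the likelihood (S4) holds: for each θ′ ∉ [θ₀] and each n ≥ 0, the function θ ↦ p_θ(Y₀ⁿ) is upper semi-continuous at θ′, P_{θ₀}-almost surely. -/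
open MeasureTheory Filter Topology

noncomputable section

open DynModel

variable {Θ X Y : Type*}
  [MetricSpace Θ] [CompactSpace Θ] [MeasurableSpace Θ] [BorelSpace Θ]
  [MetricSpace X] [CompleteSpace X] [SecondCountableTopology X]
  [MeasurableSpace X] [BorelSpace X]
  [MetricSpace Y] [CompleteSpace Y] [SecondCountableTopology Y]
  [MeasurableSpace Y] [BorelSpace Y]


open MeasureTheory in
lemma cont_integral_param {Θ X : Type*} [MetricSpace Θ] [CompactSpace Θ]
    [MetricSpace X] [CompactSpace X] [MeasurableSpace X] [BorelSpace X]
    (μ : Θ → Measure X) (hμ : ∀ θ, IsProbabilityMeasure (μ θ))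
    (hstab : ∀ f : BoundedContinuousFunction X ℝ, Continuous fun θ => ∫ x, f x ∂(μ θ))
    (F : Θ × X → ℝ) (hF : Continuous F) :
    Continuous fun θ => ∫ x, F (θ, x) ∂(μ θ) := by
  have hint : ∀ θ θ'' : Θ, Integrable (fun x => F (θ'', x)) (μ θ) := by
    intro θ θ''
    have hc : Continuous fun x => F (θ'', x) := hF.comp (Continuous.prodMk_right θ'')
    exact hc.integrable_of_hasCompactSupport (HasCompactSupport.of_compactSpace _)
  rw [Metric.continuous_iff]
  intro θ' ε hε
  have hUC : UniformContinuous F := CompactSpace.uniformContinuous_of_continuous hF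
  rw [Metric.uniformContinuous_iff] at hUC
  obtain ⟨δ, hδ, hδ'⟩ := hUC (ε / 3) (by linarith)
  set f0 : BoundedContinuousFunction X ℝ := BoundedContinuousFunction.mkOfCompact
    ⟨fun x => F (θ', x), hF.comp (Continuous.prodMk_right θ')⟩ with hf0
  have hG := hstab f0
  rw [Metric.continuous_iff] at hG
  obtain ⟨δ₂, hδ₂, hδ₂'⟩ := hG θ' (ε / 3) (by linarith)
  refine ⟨min δ δ₂, lt_min hδ hδ₂, fun θ hθ => ?_⟩
  have hθδ : dist θ θ' < δ := hθ.trans_le (min_le_left _ _)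
  have hθδ₂ : dist θ θ' < δ₂ := hθ.trans_le (min_le_right _ _)
  have h1 : dist (∫ x, F (θ, x) ∂(μ θ)) (∫ x, F (θ', x) ∂(μ θ)) ≤ ε / 3 := by
    rw [dist_eq_norm, ← integral_sub (hint θ θ) (hint θ θ')]
    have hb : ∀ x : X, ‖F (θ, x) - F (θ', x)‖ ≤ ε / 3 := by
      intro x
      have hd : dist (θ, x) (θ', x) < δ := by
        rw [Prod.dist_eq]; simp only [dist_self]; exact max_lt hθδ hδ
      have := hδ' hd
      rw [Real.dist_eq] at this
      exact le_of_lt this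
    calc ‖∫ x, (F (θ, x) - F (θ', x)) ∂(μ θ)‖
        ≤ ε / 3 * ((μ θ) Set.univ).toReal :=
          norm_integral_le_of_norm_le_const (Filter.Eventually.of_forall hb)
      _ = ε / 3 := by
          haveI := hμ θ
          simp
  have h2 : dist (∫ x, F (θ', x) ∂(μ θ)) (∫ x, F (θ', x) ∂(μ θ')) < ε / 3 := by
    have : ∀ θ'', (∫ x, F (θ', x) ∂(μ θ'')) = ∫ x, f0 x ∂(μ θ'') := by
      intro θ''; rfl
    rw [this θ, this θ']
    exact hδ₂' θ hθδ₂
  calc dist (∫ x, F (θ, x) ∂(μ θ)) (∫ x, F (θ', x) ∂(μ θ'))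
      ≤ dist (∫ x, F (θ, x) ∂(μ θ)) (∫ x, F (θ', x) ∂(μ θ)) +
        dist (∫ x, F (θ', x) ∂(μ θ)) (∫ x, F (θ', x) ∂(μ θ')) := dist_triangle _ _ _
    _ < ε / 3 + ε / 3 := by
        have := h1.trans_lt (by linarith : ε / 3 < ε / 3 + (ε / 3 - dist (∫ x, F (θ', x) ∂(μ θ)) (∫ x, F (θ', x) ∂(μ θ'))))
        linarith [h2, h1]
    _ < ε := by linarith

open MeasureTheory in
/-- If `X` and `Θ` are compact, `T` and `g` are jointly continuous
(`g` nonnegative being part of `IsModel`), and the family has statistical stability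
(`θ ↦ μ_θ` is continuous for weak convergence, i.e. `θ ↦ ∫ f dμ_θ` is continuous for
every bounded continuous `f`), then the upper semi-continuity of the likelihood (S4)
holds. -/
theorem statistical_stability_implies_usc
    [CompactSpace X]
    (M : DynModel Θ X Y) (θ₀ : Θ) (hM : M.IsModel)
    (hT : Continuous fun q : Θ × X => M.T q.1 q.2)
    (hg : Continuous fun q : Θ × X × Y => M.g q.1 q.2.1 q.2.2)
    (hstab : ∀ f : BoundedContinuousFunction X ℝ,
      Continuous fun θ => ∫ x, f x ∂(M.μ θ)) :
    M.S4 θ₀ := by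
  intro θ' _hθ' n
  refine Filter.Eventually.of_forall fun ω => ?_
  have hiter : ∀ j : ℕ, Continuous fun q : Θ × X => (M.T q.1)^[j] q.2 := by
    intro j
    induction j with
    | zero => exact continuous_snd
    | succ k ih =>
      have : (fun q : Θ × X => (M.T q.1)^[k + 1] q.2) =
          (fun q : Θ × X => (M.T q.1)^[k] q.2) ∘ fun q : Θ × X => (q.1, M.T q.1 q.2) := by
        funext q
        simp [Function.iterate_succ_apply]
      rw [this]
      exact ih.comp (continuous_fst.prodMk hT)
  have hcond : Continuous fun q : Θ × X => M.pcond q.1 n ω.2 q.2 := by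
    unfold DynModel.pcond
    apply continuous_finset_prod
    intro j _
    exact hg.comp (continuous_fst.prodMk ((hiter j).prodMk continuous_const))
  have hp : Continuous fun θ => M.p θ n ω.2 := by
    have := cont_integral_param M.μ hM.2.1 hstab
      (fun q : Θ × X => M.pcond q.1 n ω.2 q.2) hcond
    exact this
  exact (hp.continuousAt).upperSemicontinuousAt
end
end

section
/- Suppose that (T_θ, μ_θ, g_θ)_{θ∈Θ} is an isomorphic factor of (T̃_θ, μ̃_θ, g̃_θ)_{θ∈Θ} via a factor map π. Then maximum likelihood estimation is consistent for (T_θ, μ_θ, g_θ)_{θ∈Θ} if and only if maximum likelihood estimation is consistent for (T̃_θ, μ̃_θ, g̃_θ)_{θ∈Θ}. -/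
open MeasureTheory Filter Topology

noncomputable section

open DynModel

section FactorAux

variable {X Y : Type*} [MeasurableSpace X] [MeasurableSpace Y]

lemma FactorAux.cyl_zero_univ : DynModel.cyl 0 (Set.univ : Set (Fin 1 → Y)) = Set.univ := by
  ext y; simp [DynModel.cyl]

lemma FactorAux.measurableSet_cyl {n : ℕ} {B : Set (Fin (n + 1) → Y)} (hB : MeasurableSet B) :
    MeasurableSet (DynModel.cyl n B) := by
  have h : DynModel.cyl n B
      = (fun (y : ℕ → Y) (i : Fin (n + 1)) => y i.val) ⁻¹' B := rfl
  rw [h]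
  exact (measurable_pi_lambda _ fun i => measurable_pi_apply i.val) hB

lemma FactorAux.cyl_le {m n : ℕ} (h : m ≤ n) (B : Set (Fin (m + 1) → Y)) :
    DynModel.cyl m B = DynModel.cyl n
      ((fun (w : Fin (n + 1) → Y) (i : Fin (m + 1)) => w ⟨i.1, by omega⟩) ⁻¹' B) := rfl

/-- The generating π-system of rectangles with cylinder second factor. -/
def FactorAux.gen (X Y : Type*) [MeasurableSpace X] [MeasurableSpace Y] :
    Set (Set (X × (ℕ → Y))) :=
  {s | ∃ (n : ℕ) (A : Set X) (B : Set (Fin (n + 1) → Y)),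
    MeasurableSet A ∧ MeasurableSet B ∧ s = A ×ˢ DynModel.cyl n B}

lemma FactorAux.isPiSystem_gen : IsPiSystem (FactorAux.gen X Y) := by
  rintro s ⟨n₁, A₁, B₁, hA₁, hB₁, rfl⟩ t ⟨n₂, A₂, B₂, hA₂, hB₂, rfl⟩ -
  refine ⟨max n₁ n₂, A₁ ∩ A₂,
    ((fun (w : Fin (max n₁ n₂ + 1) → Y) (i : Fin (n₁ + 1)) =>
        w ⟨i.1, by omega⟩) ⁻¹' B₁) ∩
    ((fun (w : Fin (max n₁ n₂ + 1) → Y) (i : Fin (n₂ + 1)) =>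
        w ⟨i.1, by omega⟩) ⁻¹' B₂),
    hA₁.inter hA₂, ?_, ?_⟩
  · exact ((measurable_pi_lambda _ fun i => measurable_pi_apply _) hB₁).inter
      ((measurable_pi_lambda _ fun i => measurable_pi_apply _) hB₂)
  · rw [Set.prod_inter_prod, FactorAux.cyl_le (le_max_left n₁ n₂) B₁,
      FactorAux.cyl_le (le_max_right n₁ n₂) B₂]
    rfl

lemma FactorAux.generateFrom_gen :
    (inferInstance : MeasurableSpace (X × (ℕ → Y)))
      = MeasurableSpace.generateFrom (FactorAux.gen X Y) := by
  refine le_antisymm ?_ (MeasurableSpace.generateFrom_le ?_)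
  · have hfst : MeasurableSpace.comap (Prod.fst : X × (ℕ → Y) → X) inferInstance
        ≤ MeasurableSpace.generateFrom (FactorAux.gen X Y) := by
      rintro s ⟨A, hA, rfl⟩
      refine MeasurableSpace.measurableSet_generateFrom
        ⟨0, A, Set.univ, hA, MeasurableSet.univ, ?_⟩
      ext ω; simp [DynModel.cyl]
    have hsnd : MeasurableSpace.comap (Prod.snd : X × (ℕ → Y) → (ℕ → Y)) inferInstance
        ≤ MeasurableSpace.generateFrom (FactorAux.gen X Y) := by
      have hpi : (inferInstance : MeasurableSpace (ℕ → Y))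
          = ⨆ i : ℕ, MeasurableSpace.comap (fun y : ℕ → Y => y i) inferInstance := rfl
      rw [hpi, MeasurableSpace.comap_iSup]
      refine iSup_le fun i => ?_
      rw [MeasurableSpace.comap_comp]
      rintro s ⟨E, hE, rfl⟩
      refine MeasurableSpace.measurableSet_generateFrom
        ⟨i, Set.univ, (fun w : Fin (i + 1) → Y => w (Fin.last i)) ⁻¹' E,
          MeasurableSet.univ, (measurable_pi_apply _) hE, ?_⟩
      ext ω; simp [DynModel.cyl, Fin.last]
    have h : (inferInstance : MeasurableSpace (X × (ℕ → Y)))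
        = MeasurableSpace.comap Prod.fst inferInstance
            ⊔ MeasurableSpace.comap Prod.snd inferInstance := rfl
    rw [h]
    exact sup_le hfst hsnd
  · rintro s ⟨n, A, B, hA, hB, rfl⟩
    exact hA.prod (FactorAux.measurableSet_cyl hB)

end FactorAux

variable {Θ X Y : Type*}
  [MetricSpace Θ] [CompactSpace Θ] [MeasurableSpace Θ] [BorelSpace Θ]
  [MetricSpace X] [CompleteSpace X] [SecondCountableTopology X]
  [MeasurableSpace X] [BorelSpace X]
  [MetricSpace Y] [CompleteSpace Y] [SecondCountableTopology Y]
  [MeasurableSpace Y] [BorelSpace Y]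

open MeasureTheory in
/-- If `(T_θ, μ_θ, g_θ)_θ` (the model `M` on `X`) is an isomorphic
factor of `(T̃_θ, μ̃_θ, g̃_θ)_θ` (the model `Mt` on `X'`) via the factor map `π`, then
maximum likelihood estimation is consistent for the first family if and only if it is
consistent for the second. -/
theorem factor_mle_consistency_iff
    {X' : Type*} [MetricSpace X'] [CompleteSpace X'] [SecondCountableTopology X']
    [MeasurableSpace X'] [BorelSpace X']
    (M : DynModel Θ X Y) (Mt : DynModel Θ X' Y)
    (hM : M.IsModel) (hMt : Mt.IsModel)
    (hν : Mt.ν = M.ν)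
    (π : Θ → X' → X)
    (hπcont : Continuous fun q : Θ × X' => π q.1 q.2)
    (hTcont : Continuous fun q : Θ × X' => Mt.T q.1 q.2)
    -- (i) equivariance: π_θ ∘ T̃_θ = T_θ ∘ π_θ
    (hcomm : ∀ (θ : Θ) (x : X'), π θ (Mt.T θ x) = M.T θ (π θ x))
    -- (ii) μ̃_θ is the unique probability measure with μ̃_θ ∘ π_θ⁻¹ = μ_θ
    (hpush : ∀ θ : Θ, (Mt.μ θ).map (π θ) = M.μ θ)
    (huniq : ∀ (θ : Θ) (μ' : Measure X'), IsProbabilityMeasure μ' →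
      μ'.map (π θ) = M.μ θ → μ' = Mt.μ θ)
    -- (iii) π_θ is injective μ̃_θ-a.s.
    (hinj : ∀ θ : Θ, ∃ S : Set X', MeasurableSet S ∧ Mt.μ θ Sᶜ = 0 ∧
      Set.InjOn (π θ) S)
    -- g̃_θ(·∣x) = g_θ(·∣π_θ(x))
    (hg : ∀ (θ : Θ) (x : X') (y : Y), Mt.g θ x y = M.g θ (π θ x) y) :
    M.MLEConsistent ↔ Mt.MLEConsistent := by
  obtain ⟨hTm, hμprob, -, hν_sf, hgm, -, -, hPprob, hPeq⟩ := hM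
  obtain ⟨hTm', hμprob', -, -, hgm', -, -, hPprob', hPeq'⟩ := hMt
  simp only [hν] at hPeq'
  haveI : SigmaFinite M.ν := hν_sf
  -- basic measurability
  have hπm : ∀ θ, Measurable (π θ) :=
    fun θ => (hπcont.comp (Continuous.prodMk_right θ)).measurable
  have hΨm : ∀ θ, Measurable
      (fun ω : X' × (ℕ → Y) => ((π θ ω.1, ω.2) : X × (ℕ → Y))) :=
    fun θ => ((hπm θ).comp measurable_fst).prodMk measurable_snd
  have hsemi : ∀ θ, Function.Semiconj (π θ) (Mt.T θ) (M.T θ) :=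
    fun θ x' => hcomm θ x'
  -- transfer of the conditional likelihood
  have hpcond : ∀ (θ : Θ) (n : ℕ) (y : ℕ → Y) (x' : X'),
      Mt.pcond θ n y x' = M.pcond θ n y (π θ x') := by
    intro θ n y x'
    refine Finset.prod_congr rfl fun j _ => ?_
    rw [hg, (hsemi θ).iterate_right j x']
  have hpcm : ∀ (θ : Θ) (n : ℕ) (y : ℕ → Y), Measurable (M.pcond θ n y) := by
    intro θ n y
    refine Finset.measurable_prod _ fun j _ => ?_
    exact (hgm θ).comp (((hTm θ).iterate j).prodMk measurable_const)
  -- transfer of the marginal likelihood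
  have hpeq : ∀ (θ : Θ) (n : ℕ) (y : ℕ → Y), Mt.p θ n y = M.p θ n y := by
    intro θ n y
    have h1 : (Mt.p θ n y) = ∫ x', M.pcond θ n y (π θ x') ∂(Mt.μ θ) := by
      unfold DynModel.p
      exact integral_congr_ae (Filter.Eventually.of_forall fun x' => hpcond θ n y x')
    rw [h1, ← integral_map (hπm θ).aemeasurable ((hpcm θ n y).aestronglyMeasurable),
      hpush θ]
    rfl
  -- measurability of the inner kernel
  have hFmeas : ∀ (θ : Θ) (n : ℕ) (B : Set (Fin (n + 1) → Y)),
      Measurable fun x : X => ∫⁻ w in B,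
        ∏ j : Fin (n + 1), ENNReal.ofReal (M.g θ ((M.T θ)^[j.val] x) (w j))
          ∂(Measure.pi fun _ : Fin (n + 1) => M.ν) := by
    intro θ n B
    have hφ : Measurable fun q : X × (Fin (n + 1) → Y) =>
        ∏ j : Fin (n + 1), ENNReal.ofReal (M.g θ ((M.T θ)^[j.val] q.1) (q.2 j)) := by
      refine Finset.measurable_prod _ fun j _ => ?_
      exact ENNReal.measurable_ofReal.comp ((hgm θ).comp
        ((((hTm θ).iterate j.val).comp measurable_fst).prodMk
          ((measurable_pi_apply j).comp measurable_snd)))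
    exact hφ.lintegral_prod_right'
  -- the key pushforward identity
  have hmap : ∀ θ, (Mt.P θ).map
      (fun ω : X' × (ℕ → Y) => ((π θ ω.1, ω.2) : X × (ℕ → Y))) = M.P θ := by
    intro θ
    haveI : IsProbabilityMeasure (Mt.P θ) := hPprob' θ
    haveI : IsProbabilityMeasure (M.P θ) := hPprob θ
    haveI : IsProbabilityMeasure ((Mt.P θ).map
        (fun ω : X' × (ℕ → Y) => ((π θ ω.1, ω.2) : X × (ℕ → Y)))) :=
      Measure.isProbabilityMeasure_map (hΨm θ).aemeasurable
    refine MeasureTheory.ext_of_generate_finite (FactorAux.gen X Y)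
      FactorAux.generateFrom_gen FactorAux.isPiSystem_gen ?_ (by simp)
    rintro s ⟨n, A, B, hA, hB, rfl⟩
    rw [Measure.map_apply (hΨm θ) (hA.prod (FactorAux.measurableSet_cyl hB))]
    have hpre : (fun ω : X' × (ℕ → Y) => ((π θ ω.1, ω.2) : X × (ℕ → Y))) ⁻¹'
        (A ×ˢ DynModel.cyl n B) = (π θ ⁻¹' A) ×ˢ DynModel.cyl n B := rfl
    rw [hpre, hPeq' θ n _ B ((hπm θ) hA) hB, hPeq θ n A B hA hB, ← hpush θ,
      setLIntegral_map hA (hFmeas θ n B) (hπm θ)]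
    refine lintegral_congr fun x' => ?_
    refine lintegral_congr fun w => ?_
    refine Finset.prod_congr rfl fun j _ => ?_
    rw [hg, (hsemi θ).iterate_right j.val x']
  -- equality of the observation laws and classes
  have hPY : ∀ θ, Mt.PY θ = M.PY θ := by
    intro θ
    unfold DynModel.PY
    rw [← hmap θ, Measure.map_map measurable_snd (hΨm θ)]
    rfl
  have hclseq : ∀ θ₀ : Θ, Mt.cls θ₀ = M.cls θ₀ := by
    intro θ₀
    unfold DynModel.cls
    ext θ; simp only [Set.mem_setOf_eq, hPY]
  -- a measurable a.e. inverse of the factor map, at the level of the joint laws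
  have hΦ : ∀ θ₀ : Θ, ∃ Φ : X × (ℕ → Y) → X' × (ℕ → Y),
      Measurable Φ ∧ (M.P θ₀).map Φ = Mt.P θ₀ ∧ ∀ ω, (Φ ω).2 = ω.2 := by
    intro θ₀
    obtain ⟨S, hSm, hSnull, hSinj⟩ := hinj θ₀
    haveI : IsProbabilityMeasure (Mt.μ θ₀) := hμprob' θ₀
    haveI hne : Nonempty X' := by
      by_contra h
      rw [not_nonempty_iff] at h
      have h1 : (Mt.μ θ₀) Set.univ = 1 := measure_univ
      rw [Set.univ_eq_empty_iff.mpr h, measure_empty] at h1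
      exact one_ne_zero h1.symm
    haveI : StandardBorelSpace S := hSm.standardBorel
    have hjm : Measurable (fun s : S => π θ₀ s.1) :=
      (hπm θ₀).comp measurable_subtype_coe
    have hjinj : Function.Injective (fun s : S => π θ₀ s.1) :=
      fun a b hab => Subtype.ext (hSinj a.2 b.2 hab)
    have hemb : MeasurableEmbedding (fun s : S => π θ₀ s.1) :=
      hjm.measurableEmbedding hjinj
    obtain ⟨ρ, hρm, hρj⟩ := hemb.exists_measurable_extend
      (measurable_subtype_coe : Measurable (Subtype.val : S → X')) (fun _ => hne)
    have hΦm : Measurable (fun ω : X × (ℕ → Y) => ((ρ ω.1, ω.2) : X' × (ℕ → Y))) :=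
      (hρm.comp measurable_fst).prodMk measurable_snd
    refine ⟨fun ω => (ρ ω.1, ω.2), hΦm, ?_, fun _ => rfl⟩
    rw [← hmap θ₀, Measure.map_map hΦm (hΨm θ₀)]
    have h0 : Mt.P θ₀ (Sᶜ ×ˢ (Set.univ : Set (ℕ → Y))) = 0 := by
      have h1 := hPeq' θ₀ 0 Sᶜ Set.univ hSm.compl MeasurableSet.univ
      rw [FactorAux.cyl_zero_univ] at h1
      rw [h1]
      exact setLIntegral_measure_zero _ _ hSnull
    have hae : ((fun ω : X × (ℕ → Y) => ((ρ ω.1, ω.2) : X' × (ℕ → Y))) ∘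
        (fun ω' : X' × (ℕ → Y) => ((π θ₀ ω'.1, ω'.2) : X × (ℕ → Y))))
        =ᵐ[Mt.P θ₀] id := by
      have hS' : ∀ᵐ ω' ∂Mt.P θ₀, ω'.1 ∈ S := by
        rw [ae_iff]
        refine measure_mono_null ?_ h0
        intro ω' hω'
        exact ⟨hω', trivial⟩
      filter_upwards [hS'] with ω' hω'
      have h2 : ρ ((fun s : S => π θ₀ s.1) ⟨ω'.1, hω'⟩) = ω'.1 := congrFun hρj _
      show (ρ (π θ₀ ω'.1), ω'.2) = ω'
      rw [show (π θ₀ ω'.1 : X) = (fun s : S => π θ₀ s.1) ⟨ω'.1, hω'⟩ from rfl, h2]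
    rw [Measure.map_congr hae, Measure.map_id]
  -- the equivalence
  constructor
  · intro hc θ₀ est hest
    obtain ⟨Φ, hΦm, hΦmap, hΦsnd⟩ := hΦ θ₀
    have hestM : M.IsApproxMLE θ₀ est := by
      obtain ⟨h1, h2, ε, hεt, hεi⟩ := hest
      refine ⟨h1, h2, fun n ω => ε n (Φ ω), ?_, ?_⟩
      · rw [← hΦmap] at hεt
        exact (MeasureTheory.Measure.tendsto_ae_map hΦm.aemeasurable).eventually hεt
      · intro ω n θ
        have h3 := hεi (Φ ω) n θ
        rw [hΦsnd ω] at h3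
        simpa only [hpeq] using h3
    have h4 := hc θ₀ est hestM
    unfold DynModel.ConsistentAt at h4 ⊢
    rw [hclseq θ₀, ← hmap θ₀] at *
    exact (MeasureTheory.Measure.tendsto_ae_map (hΨm θ₀).aemeasurable).eventually h4
  · intro hc θ₀ est hest
    obtain ⟨Φ, hΦm, hΦmap, hΦsnd⟩ := hΦ θ₀
    have hestMt : Mt.IsApproxMLE θ₀ est := by
      obtain ⟨h1, h2, ε, hεt, hεi⟩ := hest
      refine ⟨h1, h2, fun n ω' => ε n (π θ₀ ω'.1, ω'.2), ?_, ?_⟩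
      · rw [← hmap θ₀] at hεt
        exact (MeasureTheory.Measure.tendsto_ae_map (hΨm θ₀).aemeasurable).eventually hεt
      · intro ω' n θ
        have h3 := hεi (π θ₀ ω'.1, ω'.2) n θ
        simpa only [hpeq] using h3
    have h4 := hc θ₀ est hestMt
    unfold DynModel.ConsistentAt at h4 ⊢
    rw [← hclseq θ₀, ← hΦmap] at *
    have h5 := (MeasureTheory.Measure.tendsto_ae_map hΦm.aemeasurable).eventually h4
    refine h5.mono fun ω h => ?_
    rwa [hΦsnd ω] at h
end
end
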